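/- (a) For every v = (x, y)ᵀ ∈ 𝕆² and its flip w = (y, x)ᵀ, one has (vv†)w = v(v†w). (b) For every λ ∈ 𝕆 and every v = (x, y)ᵀ ∈ 𝕍 with flip w = (y, x)ᵀ, one has ((vλ)v†)w = (vλ)(v†w) = 0, where (vλ)v† denotes the 2×2 matrix whose (i,j) entry is (v_i λ)v̄_j. -/

import Mathlib

noncomputable section

open scoped BigOperators Matrix

/-- The octonions `𝕆`, realized as the Cayley–Dickson double of the quaternions. -/
def Oct : Type := Quaternion ℝ × Quaternion ℝ

namespace Oct

instance : AddCommGroup Oct := inferInstanceAs (AddCommGroup (Quaternion ℝ × Quaternion ℝ))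
instance : Module ℝ Oct := inferInstanceAs (Module ℝ (Quaternion ℝ × Quaternion ℝ))

instance : One Oct := ⟨((1 : Quaternion ℝ), (0 : Quaternion ℝ))⟩

/-- Cayley–Dickson multiplication on `ℍ × ℍ`:
`(a, b) * (c, d) = (a c − d̄ b, d a + b c̄)`. -/
instance : Mul Oct :=
  ⟨fun x y => (x.1 * y.1 - star y.2 * x.2, y.2 * x.1 + x.2 * star y.1)⟩

theorem mul_def (x y : Oct) :
    x * y = (x.1 * y.1 - star y.2 * x.2, y.2 * x.1 + x.2 * star y.1) := rfl

@[simp] theorem fst_zero : (0 : Oct).1 = 0 := rfl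
@[simp] theorem snd_zero : (0 : Oct).2 = 0 := rfl
@[simp] theorem fst_one : (1 : Oct).1 = 1 := rfl
@[simp] theorem snd_one : (1 : Oct).2 = 0 := rfl
@[simp] theorem fst_add (x y : Oct) : (x + y).1 = x.1 + y.1 := rfl
@[simp] theorem snd_add (x y : Oct) : (x + y).2 = x.2 + y.2 := rfl

instance : NonAssocRing Oct :=
  { (inferInstance : AddCommGroup Oct), (inferInstance : One Oct), (inferInstance : Mul Oct) with
    left_distrib := by
      intro x y z
      refine Prod.ext ?_ ?_
      · show x.1 * (y.1 + z.1) - star (y.2 + z.2) * x.2 =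
          (x.1 * y.1 - star y.2 * x.2) + (x.1 * z.1 - star z.2 * x.2)
        rw [star_add]; noncomm_ring
      · show (y.2 + z.2) * x.1 + x.2 * star (y.1 + z.1) =
          (y.2 * x.1 + x.2 * star y.1) + (z.2 * x.1 + x.2 * star z.1)
        rw [star_add]; noncomm_ring
    right_distrib := by
      intro x y z
      refine Prod.ext ?_ ?_
      · show (x.1 + y.1) * z.1 - star z.2 * (x.2 + y.2) =
          (x.1 * z.1 - star z.2 * x.2) + (y.1 * z.1 - star z.2 * y.2)
        noncomm_ring
      · show z.2 * (x.1 + y.1) + (x.2 + y.2) * star z.1 =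
          (z.2 * x.1 + x.2 * star z.1) + (z.2 * y.1 + y.2 * star z.1)
        noncomm_ring
    zero_mul := by
      intro x
      refine Prod.ext ?_ ?_ <;> simp [mul_def]
    mul_zero := by
      intro x
      refine Prod.ext ?_ ?_ <;> simp [mul_def]
    one_mul := by
      intro x
      refine Prod.ext ?_ ?_ <;> simp [mul_def]
    mul_one := by
      intro x
      refine Prod.ext ?_ ?_ <;> simp [mul_def] }

/-- Octonionic conjugation `a ↦ ā`. -/
def conj (x : Oct) : Oct := (star x.1, -x.2)

/-- The canonical embedding of `ℝ` into `𝕆`. -/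
def oR (r : ℝ) : Oct := r • (1 : Oct)

/-- Real part `Re(a) = (a + ā)/2`, as an octonion. -/
def re (x : Oct) : Oct := (2 : ℝ)⁻¹ • (x + conj x)

/-- Imaginary part `Im(a) = (a − ā)/2`, as an octonion. -/
def im (x : Oct) : Oct := (2 : ℝ)⁻¹ • (x - conj x)

/-- The coefficient of `1` in an octonion (real-part coefficient). -/
def reCoeff (x : Oct) : ℝ := x.1.re

/-- Inner product `a·b = (a b̄ + b ā)/2`, a real octonion. -/
def dot (a b : Oct) : Oct := (2 : ℝ)⁻¹ • (a * conj b + b * conj a)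

/-- Norm `|a| = √(a ā)`. -/
def onorm (a : Oct) : ℝ := Real.sqrt (reCoeff (a * conj a))

/-- Octonionic associator `[a,b,c] = (ab)c − a(bc)`. -/
def assoc (a b c : Oct) : Oct := a * b * c - a * (b * c)

/-- The general 2×2 octonionic Hermitian matrix `[[p, a], [ā, m]]`. -/
def herm2 (p m : ℝ) (a : Oct) : Matrix (Fin 2) (Fin 2) Oct := !![oR p, a; conj a, oR m]

/-- `J(r̂) = [[0, −r̂], [r̂, 0]]`. -/
def J (r : Oct) : Matrix (Fin 2) (Fin 2) Oct := !![0, -r; r, 0]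

/-- The set `𝔸` of matrices `p I + q J(r̂)` with `p, q ∈ ℝ`, `q ≠ 0`,
and `r̂` a pure imaginary unit octonion (equivalently `r̂ ² = −1`). -/
def memA (A : Matrix (Fin 2) (Fin 2) Oct) : Prop :=
  ∃ (p q : ℝ) (r : Oct), q ≠ 0 ∧ r * r = -1 ∧
    A = p • (1 : Matrix (Fin 2) (Fin 2) Oct) + q • J r

/-- The set `𝕍` of vectors `(x, y)ᵀ ∈ 𝕆²` with `|x|² = |y|²` and `x·y = 0`. -/
def memV (v : Fin 2 → Oct) : Prop :=
  onorm (v 0) ^ 2 = onorm (v 1) ^ 2 ∧ dot (v 0) (v 1) = 0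

/-- The general 3×3 octonionic Hermitian matrix `[[p, a, b̄], [ā, m, c], [b, c̄, n]]`. -/
def herm3 (p m n : ℝ) (a b c : Oct) : Matrix (Fin 3) (Fin 3) Oct :=
  !![oR p, a, conj b; conj a, oR m, c; b, conj c, oR n]

/-- Vector associator `[U,V,W] = (U V†) W − U (V† W)`. -/
def vAssoc {n : ℕ} (U V W : Fin n → Oct) : Fin n → Oct :=
  fun i => (∑ j, (U i * conj (V j)) * W j) - U i * (∑ j, conj (V j) * W j)

/-- Outer product `U V†`, the matrix with `(i,j)` entry `U_i V̄_j`. -/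
def outer {n : ℕ} (U V : Fin n → Oct) : Matrix (Fin n) (Fin n) Oct :=
  Matrix.of fun i j => U i * conj (V j)

/-- `Ã = A − (tr A) I`. -/
def tilde {n : ℕ} (A : Matrix (Fin n) (Fin n) Oct) : Matrix (Fin n) (Fin n) Oct :=
  A - Matrix.of fun i j => if i = j then Matrix.trace A else 0

end Oct

open Oct

namespace Oct

theorem fst_mul (x y : Oct) : (x * y).1 = x.1 * y.1 - star y.2 * x.2 := rfl
theorem snd_mul (x y : Oct) : (x * y).2 = y.2 * x.1 + x.2 * star y.1 := rfl
theorem fst_conj (x : Oct) : (conj x).1 = star x.1 := rfl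
theorem snd_conj (x : Oct) : (conj x).2 = -x.2 := rfl

/-- Linearized right-alternative composition identity, valid for all octonions:
`(a x̄)y + (a ȳ)x = a(x̄y + ȳx)`. -/
theorem key_lin (a x y : Oct) :
    (a * conj x) * y + (a * conj y) * x = a * (conj x * y + conj y * x) := by
  refine Prod.ext ?_ ?_ <;>
  · simp only [fst_mul, snd_mul, fst_conj, snd_conj, fst_add, snd_add]
    ext <;>
    simp only [Quaternion.re_mul, Quaternion.imI_mul, Quaternion.imJ_mul, Quaternion.imK_mul,
      Quaternion.re_sub, Quaternion.imI_sub, Quaternion.imJ_sub, Quaternion.imK_sub,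
      Quaternion.re_add, Quaternion.imI_add, Quaternion.imJ_add, Quaternion.imK_add,
      Quaternion.re_neg, Quaternion.imI_neg, Quaternion.imJ_neg, Quaternion.imK_neg,
      Quaternion.re_star, Quaternion.imI_star, Quaternion.imJ_star, Quaternion.imK_star] <;>
    ring

/-- `x̄y + ȳx = xȳ + yx̄` (both equal `2⟨x,y⟩`). -/
theorem conj_swap (x y : Oct) :
    conj x * y + conj y * x = x * conj y + y * conj x := by
  refine Prod.ext ?_ ?_ <;>
  · simp only [fst_mul, snd_mul, fst_conj, snd_conj, fst_add, snd_add]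
    ext <;>
    simp only [Quaternion.re_mul, Quaternion.imI_mul, Quaternion.imJ_mul, Quaternion.imK_mul,
      Quaternion.re_sub, Quaternion.imI_sub, Quaternion.imJ_sub, Quaternion.imK_sub,
      Quaternion.re_add, Quaternion.imI_add, Quaternion.imJ_add, Quaternion.imK_add,
      Quaternion.re_neg, Quaternion.imI_neg, Quaternion.imJ_neg, Quaternion.imK_neg,
      Quaternion.re_star, Quaternion.imI_star, Quaternion.imJ_star, Quaternion.imK_star] <;>
    ring

end Oct


/-- (a) for every `v = (x,y)ᵀ ∈ 𝕆²` and its flip `w = (y,x)ᵀ`,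
`(vv†)w = v(v†w)`; (b) for every `λ ∈ 𝕆` and `v ∈ 𝕍` with flip `w`,
`((vλ)v†)w = (vλ)(v†w) = 0`. -/
theorem stmt_11 :
    (∀ x y : Oct, ∀ i : Fin 2,
        (∑ j, (![x, y] i * conj (![x, y] j)) * ![y, x] j) =
          ![x, y] i * ∑ j, conj (![x, y] j) * ![y, x] j) ∧
      (∀ lam x y : Oct, memV ![x, y] → ∀ i : Fin 2,
        ((∑ j, ((![x, y] i * lam) * conj (![x, y] j)) * ![y, x] j) =
            (![x, y] i * lam) * ∑ j, conj (![x, y] j) * ![y, x] j) ∧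
          (![x, y] i * lam) * (∑ j, conj (![x, y] j) * ![y, x] j) = 0) := by
  constructor
  · intro x y i
    fin_cases i <;>
      simp only [Fin.sum_univ_two, Matrix.cons_val_zero, Matrix.cons_val_one, Matrix.head_cons] <;>
      exact key_lin _ x y
  · intro lam x y hv i
    have hd : x * conj y + y * conj x = 0 := by
      have h := hv.2
      simp only [memV, dot, Matrix.cons_val_zero, Matrix.cons_val_one, Matrix.head_cons] at h
      have h2 := congrArg (fun z : Oct => (2 : ℝ) • z) h
      simpa [smul_smul] using h2
    have hs : conj x * y + conj y * x = 0 := (conj_swap x y).trans hd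
    simp only [Fin.sum_univ_two, Matrix.cons_val_zero, Matrix.cons_val_one, Matrix.head_cons]
    exact ⟨key_lin (![x, y] i * lam) x y, by rw [hs, mul_zero]⟩
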